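/- For every integer k ≥ 0, every square Q_k in ℤ² of side length 3^k, and every finite subgraph Γ of S whose vertices all lie in Q_k, one has cut^{1/2}(Γ) ≤ 12·2^k. -/

import Mathlib

open scoped Classical

/-- Reachability within the subgraph of `X` induced on a vertex set `s`. -/
def SimpleGraph.ReachIn {V : Type*} (X : SimpleGraph V) (s : Set V) (v w : V) : Prop :=
  ∃ (hv : v ∈ s) (hw : w ∈ s), (X.induce s).Reachable ⟨v, hv⟩ ⟨w, hw⟩

/-- The vertex set of the connected component of `v` in the subgraph of `X` induced on `s`
(empty if `v ∉ s`). -/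
def SimpleGraph.compIn {V : Type*} (X : SimpleGraph V) (s : Set V) (v : V) : Set V :=
  {w | X.ReachIn s v w}

/-- `T` is a vertex set witnessing `cut¹ᐟ²` for the subgraph of `X` induced on the finite
vertex set `G`: after removing `T` from `G`, every connected component has at most
`|G|/2` vertices. -/
def IsHalfCutSet {V : Type*} (X : SimpleGraph V) (G T : Finset V) : Prop :=
  T ⊆ G ∧ ∀ v : V, 2 * (X.compIn (↑(G \ T)) v).ncard ≤ G.card

/-- `cut¹ᐟ²` of the subgraph of `X` induced on the finite vertex set `G`: the least size of
a vertex set whose removal leaves all connected components of size at most `|G|/2`. -/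
noncomputable def cutHalf {V : Type*} (X : SimpleGraph V) (G : Finset V) : ℕ :=
  sInf {t | ∃ T : Finset V, IsHalfCutSet X G T ∧ T.card = t}

/-- The `1/2`-separation profile of `X`, over finite subgraphs with vertex set inside `W`. -/
noncomputable def sepHalf {V : Type*} (X : SimpleGraph V) (W : Set V) (n : ℕ) : ℕ :=
  sSup {c | ∃ G : Finset V, ↑G ⊆ W ∧ G.card ≤ n ∧ c = cutHalf X G}

/-- The `i`-th digit of `x` in base `b`. -/
def digit (b i x : ℕ) : ℕ := x / b ^ i % b

/-- Membership in the vertex set of the infinite Sierpinski graph: no position at which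
both coordinates have base-3 digit `1`. -/
def SierpMem (p : ℕ × ℕ) : Prop :=
  ∀ i : ℕ, ¬(digit 3 i p.1 = 1 ∧ digit 3 i p.2 = 1)

/-- The infinite Sierpinski graph `S`, with edges between valid points at `ℓ¹`-distance 1. -/
def SierpGraph : SimpleGraph (ℕ × ℕ) where
  Adj p q := SierpMem p ∧ SierpMem q ∧ |(p.1 : ℤ) - q.1| + |(p.2 : ℤ) - q.2| = 1
  symm := by
    constructor
    rintro p q ⟨hp, hq, h⟩
    exact ⟨hq, hp, by
      rw [abs_sub_comm (q.1 : ℤ) (p.1 : ℤ), abs_sub_comm (q.2 : ℤ) (p.2 : ℤ)]; exact h⟩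
  loopless := by constructor; rintro p ⟨-, -, h⟩; simp at h

/-- The vertex set of the sphere `Γ_k`. -/
noncomputable def GammaV (k : ℕ) : Finset (ℕ × ℕ) :=
  (Finset.range (3 ^ k) ×ˢ Finset.range (3 ^ k)).filter SierpMem

/-- The intersection of the vertical line `V_x` with `Γ_k`. -/
def VlineSet (k x : ℕ) : Set (ℕ × ℕ) := {p | p ∈ GammaV k ∧ p.1 = x}

/-- The intersection of the horizontal line `H_y` with `Γ_k`. -/
def HlineSet (k y : ℕ) : Set (ℕ × ℕ) := {p | p ∈ GammaV k ∧ p.2 = y}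

/-- The vertical line `V_x` is complete in `Γ_k`: its intersection with `Γ_k` is connected. -/
def CompleteV (k x : ℕ) : Prop := (SierpGraph.induce (VlineSet k x)).Connected

/-- The horizontal line `H_y` is complete in `Γ_k`: its intersection with `Γ_k` is connected. -/
def CompleteH (k y : ℕ) : Prop := (SierpGraph.induce (HlineSet k y)).Connected

/-- The vertex set of the complete-lines subgraph `C_k` of `Γ_k`. -/
noncomputable def CkV (k : ℕ) : Finset (ℕ × ℕ) :=
  (GammaV k).filter fun p => CompleteV k p.1 ∨ CompleteH k p.2

/-!
Call a column `x` cheap at scale `3 ^ j` if the last `j` ternary digits of `x` are all `1`. A point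
`(x, y)` of `S` on a cheap column has no digit `1` among the last `j` digits of `y`, so a segment of
length `t * 3 ^ j` of a cheap column meets `S` in at most `(t + 1) * 2 ^ j` points; likewise for
rows. Cheap columns recur with period `3 ^ j`. In a square of side `3 ^ (j + 1)`, remove the two
consecutive cheap columns around the place where the mass to their left passes `|G| / 2`: outside
the slab between them only components of size at most `|G| / 2` remain. Doing the same with cheap
rows inside the slab leaves a square of side `3 ^ j`, on which we recurse. One level costs
`2 * 4 * 2 ^ j + 2 * 2 * 2 ^ j = 12 * 2 ^ j` vertices, and `12 * 2 ^ j + 12 * 2 ^ j = 12 * 2 ^ (j + 1)`.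
-/

open Finset

theorem digit_succ (b i x : ℕ) : digit b (i + 1) x = digit b i (x / b) := by
  simp only [digit, pow_succ', Nat.div_div_eq_div_mul]

theorem digit_add_mul_pow {b i j : ℕ} (hb : 0 < b) (x t : ℕ) (hij : i < j) :
    digit b i (x + t * b ^ j) = digit b i x := by
  obtain ⟨k, rfl⟩ := Nat.exists_eq_add_of_lt hij
  have hdiv : (x + t * b ^ (i + k + 1)) / b ^ i = x / b ^ i + t * b ^ k * b := by
    rw [show t * b ^ (i + k + 1) = b ^ i * (t * b ^ k * b) by ring,
      Nat.add_mul_div_left _ _ (by positivity)]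
  rw [digit, digit, hdiv, Nat.add_mul_mod_self_right]

theorem mod_pow_eq_of_digit_eq {b x y : ℕ} :
    ∀ {j : ℕ}, (∀ i < j, digit b i x = digit b i y) → x % b ^ j = y % b ^ j
  | 0, _ => by simp [Nat.mod_one]
  | j + 1, h => by
    rw [Nat.mod_pow_succ, Nat.mod_pow_succ, mod_pow_eq_of_digit_eq fun i hi => h i (by omega)]
    exact congrArg _ (congrArg _ (h j j.lt_succ_self))

theorem exists_lt_pow_forall_digit_eq_one (j : ℕ) :
    ∃ r < 3 ^ j, ∀ i < j, digit 3 i r = 1 := by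
  induction j with
  | zero => exact ⟨0, by simp, by simp⟩
  | succ j ih =>
    obtain ⟨r, hr, hdig⟩ := ih
    refine ⟨3 * r + 1, by rw [pow_succ]; omega, fun i hi => ?_⟩
    cases i with
    | zero => simp [digit]
    | succ i =>
      rw [digit_succ, show (3 * r + 1) / 3 = r by omega]
      exact hdig i (by omega)

theorem card_le_of_digit_ne_one {j C t : ℕ} {Y : Finset ℕ}
    (hY : ∀ y ∈ Y, C ≤ y ∧ y ≤ C + t * 3 ^ j) (hdig : ∀ y ∈ Y, ∀ i < j, digit 3 i y ≠ 1) :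
    #Y ≤ (t + 1) * 2 ^ j := by
  set m := 3 ^ j
  have hm : 0 < m := by positivity
  let code : ℕ → ℕ × (Fin j → Bool) := fun y => (y / m - C / m, fun i => decide (digit 3 i y = 2))
  calc #Y ≤ #(range (t + 1) ×ˢ (univ : Finset (Fin j → Bool))) := by
        refine card_le_card_of_injOn code (fun y hy => ?_) (fun y hy z hz hyz => ?_)
        · have : y / m ≤ C / m + t := by
            rw [← Nat.add_mul_div_right _ _ hm]; exact Nat.div_le_div_right (hY y hy).2
          simp only [coe_product, coe_range, coe_univ, Set.mem_prod, Set.mem_Iio,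
            Set.mem_univ, and_true, code]
          omega
        · simp only [code, Prod.mk.injEq] at hyz
          have hquot : y / m = z / m := by
            have := Nat.div_le_div_right (c := m) (hY y hy).1
            have := Nat.div_le_div_right (c := m) (hY z hz).1
            omega
          have hrem : y % m = z % m := mod_pow_eq_of_digit_eq fun i hi => by
            have hi' := congrFun hyz.2 ⟨i, hi⟩
            have := hdig y hy i hi
            have := hdig z hz i hi
            have : digit 3 i y < 3 := Nat.mod_lt _ (by norm_num)
            have : digit 3 i z < 3 := Nat.mod_lt _ (by norm_num)
            simp only [decide_eq_decide] at hi'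
            omega
          rw [← Nat.div_add_mod y m, ← Nat.div_add_mod z m, hquot, hrem]
    _ = (t + 1) * 2 ^ j := by simp

theorem Set.ncard_le_card_filter {V : Type*} {s : Set V} (F : Finset V) {Q : V → Prop}
    [DecidablePred Q] (h : s ⊆ {p | p ∈ F ∧ Q p}) : s.ncard ≤ #(F.filter Q) := by
  rw [← Set.ncard_coe_finset, coe_filter]
  exact Set.ncard_le_ncard h ((F.filter Q).finite_toSet.subset (by simp [coe_filter]))

theorem exists_first_heavy_line {α : Type*} (F : Finset α) (π : α → ℕ) {n m : ℕ}
    (hF : n < 2 * #F) (hm : 0 < m) (r : ℕ) :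
    ∃ i, n < 2 * #(F.filter (π · < r + i * m)) ∧
      ∀ i' < i, 2 * #(F.filter (π · < r + i' * m)) ≤ n := by
  have hex : ∃ i, n < 2 * #(F.filter (π · < r + i * m)) := by
    refine ⟨F.sup π + 1, ?_⟩
    rw [filter_true_of_mem fun p hp => by have := le_sup (f := π) hp; nlinarith]
    exact hF
  exact ⟨Nat.find hex, Nat.find_spec hex, fun i' h => not_lt.1 (Nat.find_min hex h)⟩

theorem card_filter_two_lines_le {α : Type*} (F : Finset α) (π : α → ℕ) {m r K : ℕ}
    (hr : r < m) (hK : ∀ i, #(F.filter (π · = r + i * m)) ≤ K) (i : ℕ) :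
    #(F.filter fun p => π p = r + i * m ∨ π p + m = r + i * m) ≤ 2 * K := by
  rw [filter_or, two_mul]
  refine (card_union_le _ _).trans (add_le_add (hK i) ?_)
  cases i with
  | zero => rw [filter_false_of_mem fun p _ => by omega]; simp
  | succ i =>
    refine (card_le_card (monotone_filter_right _ fun p hp => ?_)).trans (hK i)
    simp only [add_one_mul] at hp ⊢
    omega

theorem two_mul_card_filter_gt_le {α : Type*} (F : Finset α) (π : α → ℕ) {n x : ℕ}
    (hFn : #F ≤ n) (hx : n < 2 * #(F.filter (π · < x))) : 2 * #(F.filter (x < π ·)) ≤ n := by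
  have hsplit : #(F.filter (π · < x)) + #(F.filter fun p => ¬ π p < x) = #F :=
    card_filter_add_card_filter_not _
  have : #(F.filter (x < π ·)) ≤ #(F.filter fun p => ¬ π p < x) :=
    card_le_card (monotone_filter_right _ fun p hp => by omega)
  omega

namespace SimpleGraph

variable {V : Type*} (X : SimpleGraph V) {s t : Set V} {v : V}

theorem compIn_subset : X.compIn s v ⊆ s := fun _ hw => hw.2.1

theorem mem_compIn_self (hv : v ∈ s) : v ∈ X.compIn s v := ⟨hv, hv, Reachable.refl _⟩

theorem compIn_eq_empty (hv : v ∉ s) : X.compIn s v = ∅ :=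
  Set.eq_empty_of_forall_notMem fun _ hw => hv hw.1

variable {X}

theorem compIn_mono (h : s ⊆ t) : X.compIn s v ⊆ X.compIn t v :=
  fun _ ⟨hv, hw, hr⟩ => ⟨h hv, h hw, hr.map (induceHomOfLE X h).toHom⟩

theorem mem_compIn_of_adj {p q : V} (hp : p ∈ X.compIn s v) (hq : q ∈ s) (hpq : X.Adj p q) :
    q ∈ X.compIn s v :=
  ⟨hp.1, hq, hp.2.2.trans (Adj.reachable (G := X.induce s) (u := ⟨p, hp.2.1⟩) (v := ⟨q, hq⟩) hpq)⟩

theorem compIn_subset_of_closed {P : Set V}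
    (hP : ∀ p q, p ∈ s → q ∈ s → X.Adj p q → p ∈ P → q ∈ P) (hv : v ∈ P) :
    X.compIn s v ⊆ P := by
  rintro w ⟨hvs, hws, hr⟩
  suffices ∀ u : s, Relation.ReflTransGen (X.induce s).Adj ⟨v, hvs⟩ u → (u : V) ∈ P from
    this ⟨w, hws⟩ ((reachable_iff_reflTransGen _ _).1 hr)
  intro u hu
  induction hu with
  | refl => exact hv
  | tail _ hab ih => exact hP _ _ (Subtype.prop _) (Subtype.prop _) hab ih

theorem compIn_subset_compIn_inter (h : X.compIn s v ⊆ t) :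
    X.compIn s v ⊆ X.compIn (s ∩ t) v := by
  intro w hw
  have hvs : v ∈ s := hw.1
  refine compIn_subset_of_closed (fun p q _ hq hpq hp => ?_)
    (X.mem_compIn_self (s := s ∩ t) ⟨hvs, h (X.mem_compIn_self hvs)⟩) hw
  have hqt : q ∈ t := h (mem_compIn_of_adj (compIn_mono Set.inter_subset_left hp) hq hpq)
  exact mem_compIn_of_adj hp ⟨hq, hqt⟩ hpq

theorem compIn_subset_setOf_lt {f : V → ℕ} {c : ℕ} (hf : ∀ p q, X.Adj p q → f q ≤ f p + 1)
    (hs : ∀ p ∈ s, f p ≠ c) (hv : f v < c) :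
    X.compIn s v ⊆ {p | f p < c} :=
  compIn_subset_of_closed (fun p q _ hq hpq (hp : f p < c) => by
    have := hf p q hpq; have := hs q hq; simp only [Set.mem_ofPred_eq]; omega) hv

theorem compIn_subset_setOf_gt {f : V → ℕ} {c : ℕ} (hf : ∀ p q, X.Adj p q → f q ≤ f p + 1)
    (hs : ∀ p ∈ s, f p ≠ c) (hv : c < f v) :
    X.compIn s v ⊆ {p | c < f p} :=
  compIn_subset_of_closed (fun p q _ hq hpq (hp : c < f p) => by
    have := hf q p hpq.symm; have := hs q hq; simp only [Set.mem_ofPred_eq]; omega) hv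

variable [DecidableEq V]

theorem ncard_compIn_le_of_cut {F L T : Finset V} {W : Set V} [DecidablePred (· ∈ W)] {n : ℕ}
    (hL : ∀ v, X.compIn ↑(F \ L) v ⊆ W ∨ 2 * (X.compIn ↑(F \ L) v).ncard ≤ n)
    (hT : ∀ v, 2 * (X.compIn ↑(F.filter (· ∈ W) \ T) v).ncard ≤ n) (v : V) :
    2 * (X.compIn ↑(F \ (L ∪ T)) v).ncard ≤ n := by
  have hsub : X.compIn ↑(F \ (L ∪ T)) v ⊆ X.compIn ↑(F \ L) v :=
    compIn_mono (by simp only [coe_sdiff, coe_union]; gcongr; exact Set.subset_union_left)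
  have hfin : ∀ G : Finset V, (X.compIn ↑G v).Finite :=
    fun G => G.finite_toSet.subset (X.compIn_subset)
  rcases hL v with hW | hlight
  · have : X.compIn ↑(F \ (L ∪ T)) v ⊆ X.compIn ↑(F.filter (· ∈ W) \ T) v :=
      (compIn_subset_compIn_inter (hsub.trans hW)).trans <| compIn_mono fun p hp => by
        simp only [coe_sdiff, coe_union, coe_filter, Set.mem_inter_iff,
          Set.mem_sdiff, Set.mem_union, Set.mem_ofPred_eq] at hp ⊢
        tauto
    exact (Nat.mul_le_mul_left 2 (Set.ncard_le_ncard this (hfin _))).trans (hT v)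
  · exact (Nat.mul_le_mul_left 2 (Set.ncard_le_ncard hsub (hfin _))).trans hlight

theorem exists_slab_cut {π : V → ℕ} (hπ : ∀ p q, X.Adj p q → π q ≤ π p + 1) (F : Finset V)
    {n m r K : ℕ} (hr : r < m) (hFn : #F ≤ n)
    (hK : ∀ i, #(F.filter (π · = r + i * m)) ≤ K) :
    ∃ L ⊆ F, #L ≤ 2 * K ∧ ∃ x, ∀ v,
      X.compIn ↑(F \ L) v ⊆ {p | x < π p + m ∧ π p < x} ∨
        2 * (X.compIn ↑(F \ L) v).ncard ≤ n := by
  by_cases hlight : 2 * #F ≤ n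
  · refine ⟨∅, empty_subset _, by simp, 0, fun v => Or.inr (le_trans ?_ hlight)⟩
    rw [sdiff_empty, ← Set.ncard_coe_finset]
    exact Nat.mul_le_mul_left 2 (Set.ncard_le_ncard X.compIn_subset F.finite_toSet)
  obtain ⟨i, hi, hmin⟩ := exists_first_heavy_line F π (n := n) (by omega) (by omega : 0 < m) r
  set x := r + i * m
  refine ⟨F.filter (fun p => π p = x ∨ π p + m = x), filter_subset _ _, ?_, x, fun v => ?_⟩
  · exact card_filter_two_lines_le F π hr hK i
  set s : Set V := ↑(F \ F.filter (fun p => π p = x ∨ π p + m = x))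
  have hmass : ∀ {Q : V → Prop} [DecidablePred Q], X.compIn s v ⊆ {p | Q p} →
      (X.compIn s v).ncard ≤ #(F.filter Q) := fun h =>
    Set.ncard_le_card_filter F fun w hw =>
      ⟨(mem_sdiff.1 (X.compIn_subset hw)).1, h hw⟩
  by_cases hv : v ∈ s
  swap
  · exact Or.inl (by rw [X.compIn_eq_empty hv]; exact Set.empty_subset _)
  have hline : ∀ p ∈ s, π p ≠ x ∧ π p + m ≠ x := fun p hp => by
    simp only [s, coe_sdiff, Set.mem_sdiff, mem_coe, mem_filter] at hp
    tauto
  have hπm : ∀ p q, X.Adj p q → π q + m ≤ π p + m + 1 := fun p q h => by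
    have := hπ p q h; omega
  obtain ⟨hv1, hv2⟩ := hline v hv
  rcases Nat.lt_or_gt_of_ne hv1 with hlt | hgt
  · rcases Nat.lt_or_gt_of_ne hv2 with hlt2 | hgt2
    · right
      cases i with
      | zero => simp only [x, zero_mul, add_zero] at hlt2; omega
      | succ i =>
        have hsub := compIn_subset_setOf_lt hπm (fun p hp => (hline p hp).2) hlt2
        have : (X.compIn s v).ncard ≤ #(F.filter (π · < r + i * m)) := hmass fun w hw => by
          have := hsub hw; simp only [x, add_one_mul, Set.mem_ofPred_eq] at this ⊢; omega
        have := hmin i i.lt_succ_self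
        omega
    · exact Or.inl fun w hw => ⟨compIn_subset_setOf_gt hπm (fun p hp => (hline p hp).2) hgt2 hw,
        compIn_subset_setOf_lt hπ (fun p hp => (hline p hp).1) hlt hw⟩
  · right
    exact (Nat.mul_le_mul_left 2 (hmass (compIn_subset_setOf_gt hπ
      (fun p hp => (hline p hp).1) hgt))).trans (two_mul_card_filter_gt_le F π hFn hi)

end SimpleGraph

namespace SierpGraph

theorem fst_le_of_adj {p q : ℕ × ℕ} (h : SierpGraph.Adj p q) : q.1 ≤ p.1 + 1 := by
  obtain ⟨-, -, h⟩ := h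
  have := neg_abs_le ((p.1 : ℤ) - q.1)
  have := abs_nonneg ((p.2 : ℤ) - q.2)
  omega

theorem snd_le_of_adj {p q : ℕ × ℕ} (h : SierpGraph.Adj p q) : q.2 ≤ p.2 + 1 := by
  obtain ⟨-, -, h⟩ := h
  have := abs_nonneg ((p.1 : ℤ) - q.1)
  have := neg_abs_le ((p.2 : ℤ) - q.2)
  omega

end SierpGraph

theorem card_filter_fst_eq_le {F : Finset (ℕ × ℕ)} {j C t c : ℕ} (hF : ∀ p ∈ F, SierpMem p)
    (hbox : ∀ p ∈ F, C ≤ p.2 ∧ p.2 ≤ C + t * 3 ^ j) (hc : ∀ i < j, digit 3 i c = 1) :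
    #(F.filter (·.1 = c)) ≤ (t + 1) * 2 ^ j := by
  rw [← card_image_of_injOn (f := Prod.snd) fun p hp q hq h =>
    Prod.ext (((mem_filter.1 hp).2).trans (mem_filter.1 hq).2.symm) h]
  refine card_le_of_digit_ne_one (C := C) ?_ ?_ <;>
    simp only [mem_image, mem_filter, forall_exists_index, and_imp]
  · rintro _ p hp - rfl; exact hbox p hp
  · rintro _ p hp rfl rfl i hi h; exact hF p hp i ⟨hc i hi, h⟩

theorem card_filter_snd_eq_le {F : Finset (ℕ × ℕ)} {j C t c : ℕ} (hF : ∀ p ∈ F, SierpMem p)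
    (hbox : ∀ p ∈ F, C ≤ p.1 ∧ p.1 ≤ C + t * 3 ^ j) (hc : ∀ i < j, digit 3 i c = 1) :
    #(F.filter (·.2 = c)) ≤ (t + 1) * 2 ^ j := by
  rw [← card_image_of_injOn (f := Prod.fst) fun p hp q hq h =>
    Prod.ext h (((mem_filter.1 hp).2).trans (mem_filter.1 hq).2.symm)]
  refine card_le_of_digit_ne_one (C := C) ?_ ?_ <;>
    simp only [mem_image, mem_filter, forall_exists_index, and_imp]
  · rintro _ p hp - rfl; exact hbox p hp
  · rintro _ p hp rfl rfl i hi h; exact hF p hp i ⟨h, hc i hi⟩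

/-- Components are measured against `n`, the size of the whole graph, not against `#F`: the
recursion is applied to pieces of the original graph. -/
theorem exists_cut_of_subset_square (j : ℕ) {A C n : ℕ} {F : Finset (ℕ × ℕ)}
    (hF : ∀ p ∈ F, SierpMem p)
    (hbox : ∀ p ∈ F, A ≤ p.1 ∧ p.1 ≤ A + 3 ^ j ∧ C ≤ p.2 ∧ p.2 ≤ C + 3 ^ j) (hFn : #F ≤ n) :
    ∃ T ⊆ F, #T ≤ 12 * 2 ^ j ∧ ∀ v, 2 * (SierpGraph.compIn ↑(F \ T) v).ncard ≤ n := by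
  induction j generalizing A C F with
  | zero =>
    refine ⟨F, subset_rfl, ?_, fun v => by simp [SimpleGraph.compIn_eq_empty]⟩
    have hsq : F ⊆ Finset.Icc A (A + 1) ×ˢ Finset.Icc C (C + 1) := fun p hp => by
      have := hbox p hp; simp only [pow_zero] at this; simp [mem_product]; omega
    have := card_le_card hsq
    have h2 : ∀ z, z + 1 + 1 - z = 2 := fun z => by omega
    rw [card_product, Nat.card_Icc, Nat.card_Icc, h2, h2] at this
    omega
  | succ j ih =>
    set m := 3 ^ j
    obtain ⟨r, hr, hrdig⟩ := exists_lt_pow_forall_digit_eq_one j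
    have hcheap : ∀ i, ∀ i' < j, digit 3 i' (r + i * m) = 1 := fun i i' hi' => by
      rw [digit_add_mul_pow (by norm_num) _ _ hi', hrdig i' hi']
    obtain ⟨Lv, hLv, hLvK, x, hx⟩ := SimpleGraph.exists_slab_cut
      (fun _ _ => SierpGraph.fst_le_of_adj) F hr hFn
      fun i => card_filter_fst_eq_le (t := 3) (C := C) hF (fun p hp => by
        have := hbox p hp; rw [pow_succ] at this; omega) (hcheap i)
    set F₁ := F.filter (· ∈ {p : ℕ × ℕ | x < p.1 + m ∧ p.1 < x})
    have hF₁ : F₁ ⊆ F := filter_subset _ _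
    obtain ⟨Lh, hLh, hLhK, y, hy⟩ := SimpleGraph.exists_slab_cut
      (fun _ _ => SierpGraph.snd_le_of_adj) F₁ hr ((card_le_card hF₁).trans hFn)
      fun i => card_filter_snd_eq_le (t := 1) (C := x + 1 - m) (fun p hp => hF p (hF₁ hp))
        (fun p hp => by
          have := (mem_filter.1 hp).2; simp only [Set.mem_ofPred_eq] at this; omega) (hcheap i)
    set F₂ := F₁.filter (· ∈ {p : ℕ × ℕ | y < p.2 + m ∧ p.2 < y})
    have hF₂ : F₂ ⊆ F₁ := filter_subset _ _
    obtain ⟨T, hT, hTK, hTcomp⟩ := ih (A := x + 1 - m) (C := y + 1 - m) (F := F₂)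
      (fun p hp => hF p (hF₁ (hF₂ hp)))
      (fun p hp => by
        have h₂ := (mem_filter.1 hp).2; have h₁ := (mem_filter.1 (hF₂ hp)).2
        simp only [Set.mem_ofPred_eq] at h₁ h₂; omega)
      ((card_le_card (hF₂.trans hF₁)).trans hFn)
    refine ⟨Lv ∪ (Lh ∪ T), union_subset hLv (union_subset (hLh.trans hF₁)
      (hT.trans (hF₂.trans hF₁))), ?_,
      SimpleGraph.ncard_compIn_le_of_cut hx (SimpleGraph.ncard_compIn_le_of_cut hy hTcomp)⟩
    have := card_union_le Lv (Lh ∪ T)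
    have := card_union_le Lh T
    rw [pow_succ]
    omega

/-- Every finite subgraph of the infinite Sierpinski graph contained in a square of side
length `3^k` satisfies `cut¹ᐟ² ≤ 12·2^k`. -/
theorem square_cut (k : ℕ) (a c : ℤ) (G : Finset (ℕ × ℕ)) (hmem : ∀ p ∈ G, SierpMem p)
    (hsq : ∀ p ∈ G, a ≤ (p.1 : ℤ) ∧ (p.1 : ℤ) ≤ a + 3 ^ k ∧
      c ≤ (p.2 : ℤ) ∧ (p.2 : ℤ) ≤ c + 3 ^ k) :
    cutHalf SierpGraph G ≤ 12 * 2 ^ k := by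
  obtain ⟨T, hTG, hT, hcomp⟩ := exists_cut_of_subset_square k (A := a.toNat) (C := c.toNat)
    hmem (fun p hp => by
      have := hsq p hp
      have : ((3 ^ k : ℕ) : ℤ) = 3 ^ k := by norm_cast
      omega) le_rfl
  -- `convert` bridges the classical `DecidableEq` instance used by `cutHalf`
  calc cutHalf SierpGraph G ≤ #T := Nat.sInf_le ⟨T, ⟨hTG, by convert hcomp⟩, rfl⟩
    _ ≤ 12 * 2 ^ k := hT
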